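/- Let n = 2 and A = {0,1}, and let P ⊆ 2{0,1}* be a finite joinless code. Then P is maximal as a joinless code if and only if P can be obtained from {(ε,ε)} by a finite sequence of one-step restrictions (equivalently, iff P has a parse tree). -/

import Mathlib

namespace BrinThompson

abbrev W (A : Type*) (n : ℕ) : Type _ := Fin n → List A

variable {A : Type*} {n : ℕ}

/-- Coordinatewise concatenation in `nA*`. -/
def cat (u x : W A n) : W A n := fun i => u i ++ x i

/-- `u ≤_init v` : `u` is an initial factor of `v`. -/
def initLE (u v : W A n) : Prop := ∃ x : W A n, v = cat u x

/-- `w` is the join (least upper bound) of `u` and `v` w.r.t. `≤_init`. -/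
def isJoin (u v w : W A n) : Prop :=
  initLE u w ∧ initLE v w ∧ ∀ z : W A n, initLE u z → initLE v z → initLE w z

/-- `u` and `v` have a join. -/
def HasJoin (u v : W A n) : Prop := ∃ w : W A n, isJoin u v w

/-- A joinless code: no two distinct elements have a join. -/
def JoinlessCode (S : Set (W A n)) : Prop :=
  ∀ u ∈ S, ∀ v ∈ S, u ≠ v → ¬ HasJoin u v

/-- A maximal joinless code: joinless, and every element of `nA*` has a join
with some element of the code. -/
def MaxJoinlessCode (S : Set (W A n)) : Prop :=
  JoinlessCode S ∧ ∀ x : W A n, ∃ p ∈ S, HasJoin x p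

/-- The right ideal `C · nA*` generated by `C`. -/
def genIdeal (C : Set (W A n)) : Set (W A n) := {w | ∃ c ∈ C, ∃ x : W A n, w = cat c x}

def IsRightIdeal (R : Set (W A n)) : Prop := genIdeal R = R

/-- An initial factor code: pairwise `≤_init`-incomparable set. -/
def InitFactorCode (S : Set (W A n)) : Prop :=
  ∀ u ∈ S, ∀ v ∈ S, initLE u v → u = v

/-- `A_{ε,n}`: tuples with one coordinate a single letter and the rest empty. -/
def Aeps (A : Type*) (n : ℕ) : Set (W A n) :=
  {w | ∃ i : Fin n, ∃ a : A, w i = [a] ∧ ∀ j : Fin n, j ≠ i → w j = []}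

/-- `(ε)^n`, the tuple of empty strings. -/
def epsn (A : Type*) (n : ℕ) : W A n := fun _ => []

/-- `nA^ω`: `n`-tuples of one-sided infinite sequences over `A`. -/
abbrev Winf (A : Type*) (n : ℕ) : Type _ := Fin n → ℕ → A

/-- Concatenation of a finite tuple `p ∈ nA*` with an infinite tuple `u ∈ nA^ω`. -/
def catInf (p : W A n) (u : Winf A n) : Winf A n :=
  fun i k => if h : k < (p i).length then (p i).get ⟨k, h⟩ else u i (k - (p i).length)

/-- `v` is an interior vertex of the `P`-dag: a strict initial factor of
some element of `P`. -/
def Interior (P : Set (W A n)) (v : W A n) : Prop := ∃ p ∈ P, initLE v p ∧ v ≠ p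

/-- The child of `v` in direction `i`, extended by letter `a`. -/
def child (v : W A n) (i : Fin n) (a : A) : W A n := Function.update v i (v i ++ [a])

/-- A leaf of the interior dag of `P`: an interior vertex none of whose
children is interior. -/
def InteriorLeaf (P : Set (W A n)) (v : W A n) : Prop :=
  Interior P v ∧ ∀ (i : Fin n) (a : A), ¬ Interior P (child v i a)

/-- `v_+ = (v · A_{ε,n}) ∩ P`, the set of children of `v` belonging to `P`. -/
def vplus (P : Set (W A n)) (v : W A n) : Set (W A n) :=
  {w | (∃ (i : Fin n) (a : A), w = child v i a) ∧ w ∈ P}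

/-- The depth of a vertex: the sum of the coordinate lengths. -/
def depth (v : W A n) : ℕ := ∑ i, (v i).length

/-- One-step restriction of `P` at `(p, i)`. -/
def oneStep (P : Set (W A n)) (p : W A n) (i : Fin n) : Set (W A n) :=
  (P \ {p}) ∪ {w | ∃ a : A, w = child p i a}

/-- One step in a sequence of one-step restrictions. -/
def RestrStep (P Q : Set (W A n)) : Prop := ∃ p ∈ P, ∃ i : Fin n, Q = oneStep P p i

/-- The box code `A^{k_1} × … × A^{k_n}`. -/
def box (A : Type*) {n : ℕ} (k : Fin n → ℕ) : Set (W A n) :=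
  {w | ∀ i : Fin n, (w i).length = k i}

/-- Elementwise join `P ∨ Q` of two sets, ranging over the joins that exist. -/
def setJoin (P Q : Set (W A n)) : Set (W A n) :=
  {w | ∃ p ∈ P, ∃ q ∈ Q, isJoin p q w}

/-- `ℓ(S)`: the maximum coordinate length occurring in `S`. -/
noncomputable def ell (S : Set (W A n)) : ℕ :=
  sSup {m | ∃ z ∈ S, ∃ i : Fin n, (z i).length = m}

/-- An element of `n RI^fin_A`: an injective right ideal morphism of `nA*`
whose domain code and image code are finite maximal joinless codes.
`toFun` is a total function whose values outside `Dom` are irrelevant. -/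
structure RIMfin (A : Type*) (n : ℕ) where
  Dom : Set (W A n)
  toFun : W A n → W A n
  domC : Set (W A n)
  imC : Set (W A n)
  ideal : IsRightIdeal Dom
  morph : ∀ x ∈ Dom, ∀ w : W A n, toFun (cat x w) = cat (toFun x) w
  inj : Set.InjOn toFun Dom
  domC_gen : genIdeal domC = Dom
  imC_gen : genIdeal imC = toFun '' Dom
  domC_fin : domC.Finite
  domC_max : MaxJoinlessCode domC
  imC_fin : imC.Finite
  imC_max : MaxJoinlessCode imC

/-- `ℓ(f) = max{ℓ(z) : z ∈ domC(f) ∪ imC(f)}`. -/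
noncomputable def ellF (F : RIMfin A n) : ℕ := ell (F.domC ∪ F.imC)

/-- `G` extends `F` (as partial functions). -/
def Extends (F G : RIMfin A n) : Prop :=
  F.Dom ⊆ G.Dom ∧ ∀ x ∈ F.Dom, G.toFun x = F.toFun x

/-- `F` and `G` are equal as partial functions. -/
def EquivRIM (F G : RIMfin A n) : Prop :=
  F.Dom = G.Dom ∧ ∀ x ∈ F.Dom, F.toFun x = G.toFun x

/-- `G` is a maximal extension of `F` in `n RI^fin_A`. -/
def MaxExtension (F G : RIMfin A n) : Prop :=
  Extends F G ∧ ∀ H : RIMfin A n, Extends G H → EquivRIM G H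

/-!
Restriction preserves maximality: whatever has a join with `p` has one with some child of `p`,
whatever has a join with a child of `p` has one with `p`, and distinct children of `p` have no
join.

Conversely, let `P ≠ {ε}` be a finite maximal joinless code in `2A*`. Some coordinate `i` is
nonempty in every element of `P`, since an element with empty first coordinate and one with
empty second coordinate always have a join. Sorting `P` by the first letter of coordinate `i`
splits it into maximal joinless codes of smaller depth; restricting `ε` at `i` and then
performing inside each branch the restrictions producing that branch (induction on depth)
yields `P`.
-/

theorem initLE_iff {u v : W A n} : initLE u v ↔ ∀ i, u i <+: v i := by
  constructor
  · rintro ⟨x, rfl⟩ i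
    exact ⟨x i, rfl⟩
  · intro h
    refine ⟨fun i => (v i).drop (u i).length, funext fun i => ?_⟩
    obtain ⟨t, ht⟩ := h i
    simp [cat, ← ht]

theorem hasJoin_iff {u v : W A n} : HasJoin u v ↔ ∀ i, u i <+: v i ∨ v i <+: u i := by
  classical
  constructor
  · rintro ⟨w, hu, hv, -⟩ i
    rw [initLE_iff] at hu hv
    exact List.prefix_or_prefix_of_prefix (hu i) (hv i)
  · intro h
    refine ⟨fun i => if u i <+: v i then v i else u i, ?_, ?_, ?_⟩ <;> simp only [initLE_iff]
    · intro i
      split_ifs with hc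
      exacts [hc, List.prefix_refl _]
    · intro i
      split_ifs with hc
      exacts [List.prefix_refl _, (h i).resolve_left hc]
    · intro z hu hv i
      split_ifs
      exacts [hv i, hu i]

theorem hasJoin_comm {u v : W A n} : HasJoin u v ↔ HasJoin v u := by
  simp only [hasJoin_iff, or_comm]

theorem hasJoin_epsn (u : W A n) : HasJoin (epsn A n) u :=
  hasJoin_iff.mpr fun _ => Or.inl List.nil_prefix

theorem JoinlessCode.eq_singleton_epsn {P : Set (W A n)} (hP : JoinlessCode P)
    (hε : epsn A n ∈ P) : P = {epsn A n} :=
  Set.eq_singleton_iff_unique_mem.mpr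
    ⟨hε, fun p hp => by_contra fun hne => hP _ hε p hp (Ne.symm hne) (hasJoin_epsn p)⟩

theorem maxJoinlessCode_singleton_epsn : MaxJoinlessCode ({epsn A n} : Set (W A n)) :=
  ⟨fun _ hu _ hv hne => absurd (hu.trans hv.symm) hne,
    fun x => ⟨epsn A n, rfl, hasJoin_comm.mp (hasJoin_epsn x)⟩⟩

theorem depth_eq_zero {v : W A n} : depth v = 0 ↔ v = epsn A n := by
  simp [depth, Finset.sum_eq_zero_iff, funext_iff, epsn]

theorem child_apply_self (v : W A n) (i : Fin n) (a : A) : child v i a i = v i ++ [a] :=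
  Function.update_self _ _ _

theorem child_apply_of_ne (v : W A n) {i j : Fin n} (h : j ≠ i) (a : A) : child v i a j = v j :=
  Function.update_of_ne h _ _

theorem hasJoin_of_hasJoin_child {u p : W A n} {i : Fin n} {a : A}
    (h : HasJoin u (child p i a)) : HasJoin u p := by
  rw [hasJoin_iff] at h ⊢
  intro j
  rcases eq_or_ne j i with rfl | hji
  · rcases child_apply_self p j a ▸ h j with hu | hu
    · exact (List.prefix_concat_iff.mp hu).elim (fun he => Or.inr (he ▸ List.prefix_append _ _))
        Or.inl
    · exact Or.inr ((List.prefix_append _ _).trans hu)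
  · simpa only [child_apply_of_ne p hji] using h j

theorem eq_of_hasJoin_child_child {p : W A n} {i : Fin n} {a b : A}
    (h : HasJoin (child p i a) (child p i b)) : a = b := by
  have hi := hasJoin_iff.mp h i
  simp only [child_apply_self] at hi
  rcases hi with hab | hab
  · simpa using hab.eq_of_length (by simp)
  · simpa using (hab.eq_of_length (by simp)).symm

theorem exists_hasJoin_child [Nonempty A] {x p : W A n} (h : HasJoin x p) (i : Fin n) :
    ∃ a, HasJoin x (child p i a) := by
  rw [hasJoin_iff] at h
  have hi : ∃ a, x i <+: p i ++ [a] ∨ p i ++ [a] <+: x i := by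
    rcases h i with hxp | ⟨_ | ⟨a, t⟩, ht⟩
    · exact ⟨Classical.arbitrary A, Or.inl (hxp.trans (List.prefix_append _ _))⟩
    · exact ⟨Classical.arbitrary A, Or.inl (by simp [← ht])⟩
    · exact ⟨a, Or.inr ⟨t, by simp [← ht]⟩⟩
  obtain ⟨a, ha⟩ := hi
  refine ⟨a, hasJoin_iff.mpr fun j => ?_⟩
  rcases eq_or_ne j i with rfl | hji
  · rwa [child_apply_self]
  · rw [child_apply_of_ne _ hji]
    exact h j

theorem JoinlessCode.oneStep {Q : Set (W A n)} {p : W A n} (hQ : JoinlessCode Q) (hp : p ∈ Q)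
    (i : Fin n) : JoinlessCode (oneStep Q p i) := by
  have old_new : ∀ u ∈ Q, u ≠ p → ∀ a, ¬ HasJoin u (child p i a) :=
    fun u hu hup _ hj => hQ u hu p hp hup (hasJoin_of_hasJoin_child hj)
  rintro u (⟨hu, hup⟩ | ⟨a, rfl⟩) v (⟨hv, hvp⟩ | ⟨b, rfl⟩) hne hj
  · exact hQ u hu v hv hne hj
  · exact old_new u hu hup b hj
  · exact old_new v hv hvp a (hasJoin_comm.mp hj)
  · exact hne (by rw [eq_of_hasJoin_child_child hj])

theorem MaxJoinlessCode.oneStep [Nonempty A] {Q : Set (W A n)} {p : W A n}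
    (hQ : MaxJoinlessCode Q) (hp : p ∈ Q) (i : Fin n) : MaxJoinlessCode (oneStep Q p i) := by
  refine ⟨hQ.1.oneStep hp i, fun x => ?_⟩
  obtain ⟨q, hq, hxq⟩ := hQ.2 x
  by_cases hqp : q = p
  · subst hqp
    obtain ⟨a, ha⟩ := exists_hasJoin_child hxq i
    exact ⟨_, Or.inr ⟨a, rfl⟩, ha⟩
  · exact ⟨q, Or.inl ⟨hq, hqp⟩, hxq⟩

theorem maxJoinlessCode_of_reflTransGen [Nonempty A] {P : Set (W A n)}
    (h : Relation.ReflTransGen RestrStep {epsn A n} P) : MaxJoinlessCode P := by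
  induction h with
  | refl => exact maxJoinlessCode_singleton_epsn
  | tail _ hstep ih =>
    obtain ⟨p, hp, i, rfl⟩ := hstep
    exact ih.oneStep hp i

theorem RestrStep.union_image {L : W A n → W A n} (hL : Function.Injective L)
    (hLchild : ∀ p i a, L (child p i a) = child (L p) i a) {S Q Q' : Set (W A n)}
    (hS : ∀ q, L q ∉ S) (h : RestrStep Q Q') : RestrStep (S ∪ L '' Q) (S ∪ L '' Q') := by
  obtain ⟨p, hp, i, rfl⟩ := h
  have children : L '' {w | ∃ a, w = child p i a} = {w | ∃ a, w = child (L p) i a} := by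
    ext w
    simp [hLchild, eq_comm]
  refine ⟨L p, Or.inr ⟨p, hp, rfl⟩, i, ?_⟩
  rw [oneStep, oneStep, Set.image_union, Set.image_sdiff hL, Set.image_singleton, children,
    Set.union_sdiff_distrib, Set.sdiff_singleton_eq_self (hS p), Set.union_assoc]

theorem reflTransGen_union_image {L : W A n → W A n} (hL : Function.Injective L)
    (hLchild : ∀ p i a, L (child p i a) = child (L p) i a) {S Q Q' : Set (W A n)}
    (hS : ∀ q, L q ∉ S) (h : Relation.ReflTransGen RestrStep Q Q') :
    Relation.ReflTransGen RestrStep (S ∪ L '' Q) (S ∪ L '' Q') :=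
  h.lift (fun Q => S ∪ L '' Q) fun _ _ hstep => hstep.union_image hL hLchild hS

def consAt (i : Fin n) (a : A) (q : W A n) : W A n := Function.update q i (a :: q i)

def graft (i : Fin n) (K : A → Set (W A n)) : Set (W A n) := ⋃ a, consAt i a '' K a

theorem consAt_apply_self (i : Fin n) (a : A) (q : W A n) : consAt i a q i = a :: q i :=
  Function.update_self _ _ _

theorem consAt_apply_of_ne {i j : Fin n} (h : j ≠ i) (a : A) (q : W A n) :
    consAt i a q j = q j :=
  Function.update_of_ne h _ _

theorem consAt_inj {i : Fin n} {a b : A} {q r : W A n} :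
    consAt i a q = consAt i b r ↔ a = b ∧ q = r := by
  refine ⟨fun h => ?_, fun ⟨hab, hqr⟩ => hab ▸ hqr ▸ rfl⟩
  have hi := congrFun h i
  simp only [consAt_apply_self, List.cons.injEq] at hi
  refine ⟨hi.1, funext fun j => ?_⟩
  rcases eq_or_ne j i with rfl | hji
  · exact hi.2
  · simpa only [consAt_apply_of_ne hji] using congrFun h j

theorem consAt_injective (i : Fin n) (a : A) : Function.Injective (consAt i a) :=
  fun _ _ h => (consAt_inj.mp h).2

theorem consAt_child (i : Fin n) (a : A) (q : W A n) (j : Fin n) (b : A) :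
    consAt i a (child q j b) = child (consAt i a q) j b := by
  funext k
  rcases eq_or_ne k i with rfl | hki <;> rcases eq_or_ne k j with rfl | hkj
  · rw [consAt_apply_self, child_apply_self, child_apply_self, consAt_apply_self]
    rfl
  · rw [consAt_apply_self, child_apply_of_ne _ hkj, child_apply_of_ne _ hkj, consAt_apply_self]
  · rw [consAt_apply_of_ne hki, child_apply_self, child_apply_self, consAt_apply_of_ne hki]
  · rw [consAt_apply_of_ne hki, child_apply_of_ne _ hkj, child_apply_of_ne _ hkj,
      consAt_apply_of_ne hki]

theorem consAt_epsn (i : Fin n) (a : A) : consAt i a (epsn A n) = child (epsn A n) i a := rfl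

theorem depth_consAt (i : Fin n) (a : A) (q : W A n) : depth (consAt i a q) = depth q + 1 := by
  have hlen : ∀ j, (consAt i a q j).length = (q j).length + if j = i then 1 else 0 := by
    intro j
    rcases eq_or_ne j i with rfl | hji
    · simp [consAt_apply_self]
    · simp [consAt_apply_of_ne hji, hji]
  simp only [depth, hlen, Finset.sum_add_distrib, Finset.sum_ite_eq', Finset.mem_univ, if_true]

theorem exists_eq_consAt {p : W A n} {i : Fin n} (h : p i ≠ []) : ∃ b q, p = consAt i b q := by
  obtain ⟨b, t, hbt⟩ := List.exists_cons_of_ne_nil h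
  refine ⟨b, Function.update p i t, funext fun j => ?_⟩
  rcases eq_or_ne j i with rfl | hji
  · rw [consAt_apply_self, Function.update_self, hbt]
  · rw [consAt_apply_of_ne hji, Function.update_of_ne hji]

theorem hasJoin_consAt_iff {i : Fin n} {a b : A} {u v : W A n} :
    HasJoin (consAt i a u) (consAt i b v) ↔ a = b ∧ HasJoin u v := by
  constructor
  · intro h
    have hi := hasJoin_iff.mp h i
    simp only [consAt_apply_self, List.cons_prefix_cons] at hi
    refine ⟨hi.elim (·.1) (·.1.symm), hasJoin_iff.mpr fun j => ?_⟩
    rcases eq_or_ne j i with rfl | hji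
    · exact hi.imp (·.2) (·.2)
    · simpa only [consAt_apply_of_ne hji] using hasJoin_iff.mp h j
  · rintro ⟨rfl, h⟩
    refine hasJoin_iff.mpr fun j => ?_
    rcases eq_or_ne j i with rfl | hji
    · simpa only [consAt_apply_self, List.cons_prefix_cons, true_and] using hasJoin_iff.mp h j
    · simpa only [consAt_apply_of_ne hji] using hasJoin_iff.mp h j

theorem JoinlessCode.preimage_consAt {P : Set (W A n)} (hP : JoinlessCode P) (i : Fin n)
    (a : A) : JoinlessCode (consAt i a ⁻¹' P) :=
  fun _ hu _ hv hne hj =>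
    hP _ hu _ hv ((consAt_injective i a).ne hne) (hasJoin_consAt_iff.mpr ⟨rfl, hj⟩)

theorem MaxJoinlessCode.preimage_consAt {P : Set (W A n)} {i : Fin n} (hP : MaxJoinlessCode P)
    (hne : ∀ p ∈ P, p i ≠ []) (a : A) : MaxJoinlessCode (consAt i a ⁻¹' P) := by
  refine ⟨hP.1.preimage_consAt i a, fun x => ?_⟩
  obtain ⟨p, hp, hxp⟩ := hP.2 (consAt i a x)
  obtain ⟨b, q, rfl⟩ := exists_eq_consAt (hne p hp)
  obtain ⟨rfl, hxq⟩ := hasJoin_consAt_iff.mp hxp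
  exact ⟨q, hp, hxq⟩

theorem graft_preimage_consAt {P : Set (W A n)} {i : Fin n} (hne : ∀ p ∈ P, p i ≠ []) :
    graft i (fun a => consAt i a ⁻¹' P) = P := by
  ext w
  simp only [graft, Set.mem_iUnion, Set.mem_image, Set.mem_preimage]
  constructor
  · rintro ⟨a, q, hq, rfl⟩
    exact hq
  · intro hw
    obtain ⟨b, q, rfl⟩ := exists_eq_consAt (hne w hw)
    exact ⟨b, q, hw, rfl⟩

theorem oneStep_epsn (i : Fin n) :
    oneStep {epsn A n} (epsn A n) i = graft i fun _ => {epsn A n} := by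
  ext w
  simp [oneStep, graft, consAt_epsn, eq_comm]

theorem graft_update [DecidableEq A] (i : Fin n) (K : A → Set (W A n)) (b : A)
    (X : Set (W A n)) :
    graft i (Function.update K b X) = (⋃ (a) (_ : a ≠ b), consAt i a '' K a) ∪ consAt i b '' X := by
  ext w
  simp only [graft, Set.mem_iUnion, Set.mem_union, Function.update_apply]
  constructor
  · rintro ⟨a, ha⟩
    by_cases hab : a = b
    · subst hab
      exact Or.inr (by simpa using ha)
    · exact Or.inl ⟨a, hab, by simpa [hab] using ha⟩
  · rintro (⟨a, hab, ha⟩ | hb)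
    · exact ⟨a, by simpa [hab] using ha⟩
    · exact ⟨b, by simpa using hb⟩

theorem reflTransGen_graft_update [DecidableEq A] {i : Fin n} {K : A → Set (W A n)} {b : A}
    {X Y : Set (W A n)} (h : Relation.ReflTransGen RestrStep X Y) :
    Relation.ReflTransGen RestrStep (graft i (Function.update K b X))
      (graft i (Function.update K b Y)) := by
  rw [graft_update, graft_update]
  refine reflTransGen_union_image (consAt_injective i b) (consAt_child i b) (fun q hq => ?_) h
  simp only [Set.mem_iUnion, Set.mem_image] at hq
  obtain ⟨a, hab, r, -, hr⟩ := hq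
  exact hab (consAt_inj.mp hr).1

theorem reflTransGen_graft [Finite A] {i : Fin n} {F G : A → Set (W A n)}
    (h : ∀ a, Relation.ReflTransGen RestrStep (F a) (G a)) :
    Relation.ReflTransGen RestrStep (graft i F) (graft i G) := by
  classical
  have := Fintype.ofFinite A
  let H (s : Finset A) (a : A) := if a ∈ s then G a else F a
  suffices ∀ s, Relation.ReflTransGen RestrStep (graft i F) (graft i (H s)) by
    simpa [H] using this Finset.univ
  intro s
  induction s using Finset.induction_on with
  | empty => simp [H, Relation.ReflTransGen.refl]
  | insert b s hb ih =>
    have step := reflTransGen_graft_update (i := i) (K := H s) (b := b) (h b)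
    have hHb : H s b = F b := if_neg hb
    rw [← hHb, Function.update_eq_self] at step
    convert ih.trans step using 3
    funext a
    by_cases hab : a = b
    · subst hab
      simp [H]
    · simp [H, hab]

theorem JoinlessCode.exists_forall_ne_nil {P : Set (W A 2)} (hP : JoinlessCode P)
    (hε : epsn A 2 ∉ P) : ∃ i, ∀ p ∈ P, p i ≠ [] := by
  by_contra! h
  obtain ⟨p, hp, hp0⟩ := h 0
  obtain ⟨r, hr, hr1⟩ := h 1
  have hpr : p = r := by
    by_contra hne
    refine hP p hp r hr hne (hasJoin_iff.mpr fun j => ?_)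
    fin_cases j
    · exact Or.inl (hp0 ▸ List.nil_prefix)
    · exact Or.inr (hr1 ▸ List.nil_prefix)
  have hpε : p = epsn A 2 := by
    funext j
    fin_cases j
    exacts [hp0, hpr ▸ hr1]
  exact hε (hpε ▸ hp)

theorem reflTransGen_of_maxJoinlessCode_of_depth_le [Finite A] (N : ℕ) {P : Set (W A 2)}
    (hP : MaxJoinlessCode P) (hN : ∀ p ∈ P, depth p ≤ N) :
    Relation.ReflTransGen RestrStep {epsn A 2} P := by
  induction N generalizing P with
  | zero =>
    obtain ⟨p, hp, -⟩ := hP.2 (epsn A 2)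
    rw [hP.1.eq_singleton_epsn (depth_eq_zero.mp (Nat.le_zero.mp (hN p hp)) ▸ hp)]
  | succ N ih =>
    by_cases hε : epsn A 2 ∈ P
    · rw [hP.1.eq_singleton_epsn hε]
    obtain ⟨i, hne⟩ := hP.1.exists_forall_ne_nil hε
    have branch (a : A) : Relation.ReflTransGen RestrStep {epsn A 2} (consAt i a ⁻¹' P) :=
      ih (hP.preimage_consAt hne a) fun q hq => by
        have := hN _ hq
        rw [depth_consAt] at this
        omega
    rw [← graft_preimage_consAt hne]
    exact .head ⟨_, rfl, i, (oneStep_epsn i).symm⟩ (reflTransGen_graft branch)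

theorem maxJoinless_iff_restrictions_from_eps_general {P : Set (W Bool 2)}
    (hfin : P.Finite) :
    MaxJoinlessCode P ↔
      Relation.ReflTransGen RestrStep {epsn Bool 2} P := by
  refine ⟨fun hP => ?_, maxJoinlessCode_of_reflTransGen⟩
  obtain ⟨N, hN⟩ := (hfin.image depth).bddAbove
  exact reflTransGen_of_maxJoinlessCode_of_depth_le N hP fun p hp => hN ⟨p, hp, rfl⟩

/-- For `n = 2`, `A = {0,1}`: a finite joinless code is maximal iff it can be
obtained from `{(ε,ε)}` by a finite sequence of one-step restrictions. -/
theorem maxJoinless_iff_restrictions_from_eps {P : Set (W Bool 2)}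
    (hfin : P.Finite) (hjl : JoinlessCode P) :
    MaxJoinlessCode P ↔
      Relation.ReflTransGen RestrStep {epsn Bool 2} P :=
  maxJoinless_iff_restrictions_from_eps_general hfin

end BrinThompson
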